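/- Equivalence of downward and upward alignment: Suppose μ ∈ P₂(ℝⁿ) and ν ∈ P₂(ℝ^d) are normalized to have zero means and identity covariance matrices. Then ( W₂^{↑}(μ,ν) )² = ( W₂^{↓}(μ,ν) )² + (n − d), and a matrix A ∈ H is optimal for the upward problem W₂^{↑}(μ,ν) (i.e. W₂(μ, A_#ν) = W₂^{↑}(μ,ν)) if and only if it is optimal for the downward problem W₂^{↓}(μ,ν) (i.e. W₂(Aᵀ_#μ, ν) = W₂^{↓}(μ,ν)). -/

import Mathlib

/-!
For `A` with orthonormal columns, `‖x - A z‖² = ‖Aᵀ x - z‖² + (‖x‖² - ‖Aᵀ x‖²)`.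
A coupling `σ` of `μ` and `ν` yields the upward coupling of `(x, A z)` and the downward
coupling of `(Aᵀ x, z)`, and integrating the identity shows that their costs differ by
`∫ (‖x‖² - ‖Aᵀ x‖²) dμ`, which is `n - d` because `μ` has identity covariance. Every upward
coupling arises in this way, since `A_#ν` is carried by the range of `A`, and so does every
downward coupling, by gluing along `x ↦ Aᵀ x` through a disintegration. Hence
`W₂(μ, A_#ν)² = W₂(Aᵀ_#μ, ν)² + (n - d)` for each `A ∈ H`, and both claims follow by taking
infima over `H`, because `t ↦ √(t² + n - d)` is continuous and strictly increasing on `[0, ∞)`.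
-/

open MeasureTheory Matrix

/-- The 2-Wasserstein distance between Borel probability measures on `ℝ^k`
(vectors as `Fin k → ℝ`, squared Euclidean cost). -/
noncomputable def W2 {k : ℕ} (ρ σ : Measure (Fin k → ℝ)) : ℝ :=
  Real.sqrt (sInf { v : ℝ | ∃ π : Measure ((Fin k → ℝ) × (Fin k → ℝ)),
    π.map Prod.fst = ρ ∧ π.map Prod.snd = σ ∧
    v = ∫ p, ∑ i, (p.1 i - p.2 i) ^ 2 ∂π })

/-- The downward 2-Wasserstein loss `W₂^↓(μ,ν) = inf_{A ∈ H} W₂(Aᵀ_#μ, ν)`. -/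
noncomputable def W2down {n d : ℕ}
    (μ : Measure (Fin n → ℝ)) (ν : Measure (Fin d → ℝ)) : ℝ :=
  sInf { v : ℝ | ∃ A : Matrix (Fin n) (Fin d) ℝ, Aᵀ * A = 1 ∧
    v = W2 (μ.map Aᵀ.mulVec) ν }

/-- The upward 2-Wasserstein loss `W₂^↑(μ,ν) = inf_{A ∈ H} W₂(μ, A_#ν)`. -/
noncomputable def W2up {n d : ℕ}
    (μ : Measure (Fin n → ℝ)) (ν : Measure (Fin d → ℝ)) : ℝ :=
  sInf { v : ℝ | ∃ A : Matrix (Fin n) (Fin d) ℝ, Aᵀ * A = 1 ∧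
    v = W2 μ (ν.map A.mulVec) }

section Isometry

variable {n d : ℕ} {A : Matrix (Fin n) (Fin d) ℝ}

lemma transpose_mulVec_mulVec_of_transpose_mul_self (hA : Aᵀ * A = 1) (z : Fin d → ℝ) :
    Aᵀ *ᵥ (A *ᵥ z) = z := by
  rw [mulVec_mulVec, hA, one_mulVec]

lemma sum_sq_mulVec_of_transpose_mul_self (hA : Aᵀ * A = 1) (z : Fin d → ℝ) :
    ∑ i, (A *ᵥ z) i ^ 2 = ∑ j, z j ^ 2 := by
  simp only [sq]
  change (A *ᵥ z) ⬝ᵥ (A *ᵥ z) = z ⬝ᵥ z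
  rw [dotProduct_mulVec, ← mulVec_transpose, transpose_mulVec_mulVec_of_transpose_mul_self hA]

lemma sum_mul_mulVec (x : Fin n → ℝ) (z : Fin d → ℝ) :
    ∑ i, x i * (A *ᵥ z) i = ∑ j, (Aᵀ *ᵥ x) j * z j := by
  change x ⬝ᵥ (A *ᵥ z) = (Aᵀ *ᵥ x) ⬝ᵥ z
  rw [dotProduct_mulVec, ← mulVec_transpose]

lemma sum_sub_mulVec_sq_of_transpose_mul_self (hA : Aᵀ * A = 1) (x : Fin n → ℝ)
    (z : Fin d → ℝ) :
    ∑ i, (x i - (A *ᵥ z) i) ^ 2 =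
      ∑ j, ((Aᵀ *ᵥ x) j - z j) ^ 2 + (∑ i, x i ^ 2 - ∑ j, (Aᵀ *ᵥ x) j ^ 2) := by
  have expand {k : ℕ} (v w : Fin k → ℝ) :
      ∑ i, (v i - w i) ^ 2 = ∑ i, v i ^ 2 - 2 * ∑ i, v i * w i + ∑ i, w i ^ 2 := by
    simp only [sub_sq, Finset.sum_add_distrib, Finset.sum_sub_distrib, Finset.mul_sum, mul_assoc]
  rw [expand, expand, sum_sq_mulVec_of_transpose_mul_self hA, sum_mul_mulVec]
  ring

lemma exists_transpose_mul_self_eq_one (hnd : d ≤ n) :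
    ∃ A : Matrix (Fin n) (Fin d) ℝ, Aᵀ * A = 1 := by
  refine ⟨(1 : Matrix (Fin n) (Fin n) ℝ).submatrix id (Fin.castLE hnd), ?_⟩
  rw [transpose_submatrix, transpose_one, ← submatrix_mul _ _ _ _ _ Function.bijective_id,
    one_mul, submatrix_one _ (Fin.castLE_injective hnd)]

end Isometry

section SecondMoments

variable {k : ℕ} {ρ : Measure (Fin k → ℝ)}

lemma mulVec_apply_sq {m : ℕ} (B : Matrix (Fin m) (Fin k) ℝ) (x : Fin k → ℝ) (j : Fin m) :
    (B *ᵥ x) j ^ 2 = ∑ i, ∑ i', B j i * B j i' * (x i * x i') := by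
  simp only [mulVec, dotProduct, sq, Finset.sum_mul_sum]
  exact Finset.sum_congr rfl fun i _ => Finset.sum_congr rfl fun i' _ => by ring

lemma integrable_mul_apply (h2 : Integrable (fun x => ∑ i, x i ^ 2) ρ) (i i' : Fin k) :
    Integrable (fun x => x i * x i') ρ := by
  refine h2.mono' (by fun_prop) (Filter.Eventually.of_forall fun x => ?_)
  have hi := Finset.single_le_sum (fun j _ => sq_nonneg (x j)) (Finset.mem_univ i)
  have hi' := Finset.single_le_sum (fun j _ => sq_nonneg (x j)) (Finset.mem_univ i')
  rw [Real.norm_eq_abs, abs_mul]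
  nlinarith [sq_abs (x i), sq_abs (x i'), sq_nonneg (|x i| - |x i'|)]

lemma integrable_sum_sq_mulVec {m : ℕ} (h2 : Integrable (fun x => ∑ i, x i ^ 2) ρ)
    (B : Matrix (Fin m) (Fin k) ℝ) : Integrable (fun x => ∑ j, (B *ᵥ x) j ^ 2) ρ := by
  simp only [mulVec_apply_sq]
  exact integrable_finsetSum _ fun j _ => integrable_finsetSum _ fun i _ =>
    integrable_finsetSum _ fun i' _ => (integrable_mul_apply h2 i i').const_mul _

lemma integral_sum_sum_mul_mul_apply (h2 : Integrable (fun x => ∑ i, x i ^ 2) ρ)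
    (hcov : ∀ i i', ∫ x, x i * x i' ∂ρ = if i = i' then 1 else 0) (c : Fin k → Fin k → ℝ) :
    ∫ x, ∑ i, ∑ i', c i i' * (x i * x i') ∂ρ = ∑ i, c i i := by
  rw [integral_finsetSum _ fun i _ => integrable_finsetSum _ fun i' _ =>
    (integrable_mul_apply h2 i i').const_mul _]
  refine Finset.sum_congr rfl fun i _ => ?_
  rw [integral_finsetSum _ fun i' _ => (integrable_mul_apply h2 i i').const_mul _]
  simp [integral_const_mul, hcov]

lemma integral_sum_sq_mulVec {m : ℕ} (h2 : Integrable (fun x => ∑ i, x i ^ 2) ρ)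
    (hcov : ∀ i i', ∫ x, x i * x i' ∂ρ = if i = i' then 1 else 0)
    (B : Matrix (Fin m) (Fin k) ℝ) : ∫ x, ∑ j, (B *ᵥ x) j ^ 2 ∂ρ = trace (B * Bᵀ) := by
  simp only [mulVec_apply_sq]
  rw [integral_finsetSum _ fun j _ => integrable_finsetSum _ fun i _ =>
    integrable_finsetSum _ fun i' _ => (integrable_mul_apply h2 i i').const_mul _]
  simp only [integral_sum_sum_mul_mul_apply h2 hcov]
  rfl

lemma integral_sum_sq_sub_sum_sq_transpose_mulVec {n d : ℕ} {μ : Measure (Fin n → ℝ)}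
    (h2 : Integrable (fun x => ∑ i, x i ^ 2) μ)
    (hcov : ∀ i i', ∫ x, x i * x i' ∂μ = if i = i' then 1 else 0)
    {A : Matrix (Fin n) (Fin d) ℝ} (hA : Aᵀ * A = 1) :
    ∫ x, (∑ i, x i ^ 2 - ∑ j, (Aᵀ *ᵥ x) j ^ 2) ∂μ = n - d := by
  have hn := integral_sum_sq_mulVec h2 hcov (1 : Matrix (Fin n) (Fin n) ℝ)
  simp only [one_mulVec, transpose_one, one_mul] at hn
  rw [integral_sub h2 (integrable_sum_sq_mulVec h2 Aᵀ), integral_sum_sq_mulVec h2 hcov,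
    transpose_transpose, hA, hn, trace_one, trace_one, Fintype.card_fin, Fintype.card_fin]

lemma integrable_sum_sub_sq {α : Type*} [MeasurableSpace α] {π : Measure α}
    {u w : α → Fin k → ℝ} (hu : Measurable u) (hw : Measurable w)
    (hu2 : Integrable (fun a => ∑ i, u a i ^ 2) π) (hw2 : Integrable (fun a => ∑ i, w a i ^ 2) π) :
    Integrable (fun a => ∑ i, (u a i - w a i) ^ 2) π := by
  refine ((hu2.const_mul 2).add (hw2.const_mul 2)).mono' (by fun_prop)
    (Filter.Eventually.of_forall fun a => ?_)
  rw [Real.norm_of_nonneg (by positivity), Pi.add_apply, Finset.mul_sum, Finset.mul_sum,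
    ← Finset.sum_add_distrib]
  exact Finset.sum_le_sum fun i _ => by nlinarith [sq_nonneg (u a i + w a i)]

end SecondMoments

namespace MeasureTheory.Measure

open ProbabilityTheory

variable {X Y Z W : Type*} [MeasurableSpace X] [MeasurableSpace Y] [MeasurableSpace Z]
  [MeasurableSpace W]

lemma map_prodMap_map_fst (π : Measure (X × Y)) {f : X → Z} {g : Y → W} (hf : Measurable f)
    (hg : Measurable g) : (π.map (Prod.map f g)).map Prod.fst = (π.map Prod.fst).map f := by
  rw [map_map measurable_fst (hf.prodMap hg), map_map hf measurable_fst]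
  rfl

lemma map_prodMap_map_snd (π : Measure (X × Y)) {f : X → Z} {g : Y → W} (hf : Measurable f)
    (hg : Measurable g) : (π.map (Prod.map f g)).map Prod.snd = (π.map Prod.snd).map g := by
  rw [map_map measurable_snd (hf.prodMap hg), map_map hg measurable_snd]
  rfl

lemma compProd_comap_map_prodMap (μ : Measure X) [SFinite μ] (κ : Kernel Y Z) [IsMarkovKernel κ]
    {g : X → Y} (hg : Measurable g) :
    (μ ⊗ₘ κ.comap g hg).map (Prod.map g id) = μ.map g ⊗ₘ κ := by
  ext s hs
  rw [map_apply (hg.prodMap measurable_id) hs, compProd_apply (hg.prodMap measurable_id hs),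
    compProd_apply hs, lintegral_map (Kernel.measurable_kernel_prodMk_left hs) hg]
  rfl

lemma exists_map_fst_eq_map_prodMap_eq [StandardBorelSpace Z] [Nonempty Z] (μ : Measure X)
    [IsFiniteMeasure μ] {g : X → Y} (hg : Measurable g) {γ : Measure (Y × Z)}
    (hγ : γ.map Prod.fst = μ.map g) :
    ∃ σ : Measure (X × Z), σ.map Prod.fst = μ ∧ σ.map (Prod.map g id) = γ := by
  have : IsFiniteMeasure γ := ⟨by rw [← fst_univ, fst, hγ]; exact measure_lt_top _ _⟩
  refine ⟨μ ⊗ₘ γ.condKernel.comap g hg, fst_compProd _ _, ?_⟩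
  rw [compProd_comap_map_prodMap μ γ.condKernel hg, ← hγ]
  exact γ.disintegrate γ.condKernel

end MeasureTheory.Measure

section Couplings

variable {k : ℕ} {ρ σ : Measure (Fin k → ℝ)}

def couplingCosts (ρ σ : Measure (Fin k → ℝ)) : Set ℝ :=
  { v | ∃ π : Measure ((Fin k → ℝ) × (Fin k → ℝ)),
    π.map Prod.fst = ρ ∧ π.map Prod.snd = σ ∧ v = ∫ p, ∑ i, (p.1 i - p.2 i) ^ 2 ∂π }

lemma nonneg_of_mem_couplingCosts {v : ℝ} (hv : v ∈ couplingCosts ρ σ) : 0 ≤ v := by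
  obtain ⟨π, -, -, rfl⟩ := hv
  exact integral_nonneg fun p => by positivity

lemma couplingCosts_nonempty [IsProbabilityMeasure ρ] [IsProbabilityMeasure σ] :
    (couplingCosts ρ σ).Nonempty :=
  ⟨_, ρ.prod σ, Measure.fst_prod, Measure.snd_prod, rfl⟩

lemma W2_nonneg (ρ σ : Measure (Fin k → ℝ)) : 0 ≤ W2 ρ σ :=
  Real.sqrt_nonneg _

lemma sq_W2 (ρ σ : Measure (Fin k → ℝ)) : W2 ρ σ ^ 2 = sInf (couplingCosts ρ σ) :=
  Real.sq_sqrt <| Real.sInf_nonneg fun _ => nonneg_of_mem_couplingCosts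

end Couplings

section Alignment

variable {n d : ℕ} {μ : Measure (Fin n → ℝ)} {ν : Measure (Fin d → ℝ)}
  {A : Matrix (Fin n) (Fin d) ℝ}

lemma integral_cost_map_prodMap_id_mulVec (hA : Aᵀ * A = 1)
    (hμ2 : Integrable (fun x => ∑ i, x i ^ 2) μ) (hν2 : Integrable (fun z => ∑ j, z j ^ 2) ν)
    {σ : Measure ((Fin n → ℝ) × (Fin d → ℝ))} (hσ1 : σ.map Prod.fst = μ)
    (hσ2 : σ.map Prod.snd = ν) :
    ∫ p, ∑ i, (p.1 i - p.2 i) ^ 2 ∂σ.map (Prod.map id A.mulVec) =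
      ∫ p, ∑ j, (p.1 j - p.2 j) ^ 2 ∂σ.map (Prod.map Aᵀ.mulVec id) +
        ∫ x, (∑ i, x i ^ 2 - ∑ j, (Aᵀ *ᵥ x) j ^ 2) ∂μ := by
  have hdown : Integrable (fun p => ∑ j, ((Aᵀ *ᵥ p.1) j - p.2 j) ^ 2) σ := by
    refine integrable_sum_sub_sq (by fun_prop) (by fun_prop) ?_ ?_
    · exact (hσ1 ▸ integrable_sum_sq_mulVec hμ2 Aᵀ).comp_measurable measurable_fst
    · exact (hσ2 ▸ hν2).comp_measurable measurable_snd
  have hrest : Integrable (fun p => ∑ i, p.1 i ^ 2 - ∑ j, (Aᵀ *ᵥ p.1) j ^ 2) σ :=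
    (hσ1 ▸ hμ2.sub (integrable_sum_sq_mulVec hμ2 Aᵀ)).comp_measurable measurable_fst
  rw [integral_map (by fun_prop) (by fun_prop), integral_map (by fun_prop) (by fun_prop), ← hσ1,
    integral_map (by fun_prop) (by fun_prop)]
  simp only [Prod.map_fst, Prod.map_snd, id_eq, sum_sub_mulVec_sq_of_transpose_mul_self hA]
  exact integral_add hdown hrest

lemma map_prodMap_id_mulVec_map_prodMap_id_transpose_mulVec (hA : Aᵀ * A = 1)
    {π : Measure ((Fin n → ℝ) × (Fin n → ℝ))} (hπ2 : π.map Prod.snd = ν.map A.mulVec) :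
    (π.map (Prod.map id Aᵀ.mulVec)).map (Prod.map id A.mulVec) = π := by
  have hrange : ∀ᵐ y ∂ν.map A.mulVec, A *ᵥ (Aᵀ *ᵥ y) = y :=
    (ae_map_iff (by fun_prop) (measurableSet_eq_fun (by fun_prop) measurable_id)).2 <|
      ae_of_all _ fun z => by simp [transpose_mulVec_mulVec_of_transpose_mul_self hA]
  have hfix : Prod.map id (A.mulVec ∘ Aᵀ.mulVec) =ᵐ[π] id := by
    filter_upwards [ae_of_ae_map measurable_snd.aemeasurable (hπ2 ▸ hrange)] with p hp
    exact Prod.ext rfl hp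
  rw [Measure.map_map (by fun_prop) (by fun_prop), Prod.map_comp_map, Function.id_comp,
    Measure.map_congr hfix, Measure.map_id]

lemma couplingCosts_map_mulVec [IsFiniteMeasure μ] (hA : Aᵀ * A = 1)
    (hμ2 : Integrable (fun x => ∑ i, x i ^ 2) μ) (hν2 : Integrable (fun z => ∑ j, z j ^ 2) ν) :
    couplingCosts μ (ν.map A.mulVec) =
      (· + ∫ x, (∑ i, x i ^ 2 - ∑ j, (Aᵀ *ᵥ x) j ^ 2) ∂μ) ''
        couplingCosts (μ.map Aᵀ.mulVec) ν := by
  have hAm : Measurable A.mulVec := by fun_prop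
  have hAtm : Measurable Aᵀ.mulVec := by fun_prop
  ext v
  constructor
  · rintro ⟨π, hπ1, hπ2, rfl⟩
    set σ := π.map (Prod.map id Aᵀ.mulVec)
    have hσ1 : σ.map Prod.fst = μ := by
      rw [Measure.map_prodMap_map_fst _ measurable_id hAtm, hπ1, Measure.map_id]
    have hσ2 : σ.map Prod.snd = ν := by
      rw [Measure.map_prodMap_map_snd _ measurable_id hAtm, hπ2, Measure.map_map hAtm hAm]
      simp [Function.comp_def, transpose_mulVec_mulVec_of_transpose_mul_self hA]
    refine ⟨_, ⟨σ.map (Prod.map Aᵀ.mulVec id), ?_, ?_, rfl⟩, ?_⟩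
    · rw [Measure.map_prodMap_map_fst _ hAtm measurable_id, hσ1]
    · rw [Measure.map_prodMap_map_snd _ hAtm measurable_id, hσ2, Measure.map_id]
    · dsimp only
      rw [← integral_cost_map_prodMap_id_mulVec hA hμ2 hν2 hσ1 hσ2,
        map_prodMap_id_mulVec_map_prodMap_id_transpose_mulVec hA hπ2]
  · rintro ⟨_, ⟨γ, hγ1, hγ2, rfl⟩, rfl⟩
    obtain ⟨σ, hσ1, rfl⟩ := Measure.exists_map_fst_eq_map_prodMap_eq μ hAtm hγ1
    have hσ2 : σ.map Prod.snd = ν := by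
      rw [← hγ2, Measure.map_prodMap_map_snd _ hAtm measurable_id, Measure.map_id]
    refine ⟨σ.map (Prod.map id A.mulVec), ?_, ?_,
      (integral_cost_map_prodMap_id_mulVec hA hμ2 hν2 hσ1 hσ2).symm⟩
    · rw [Measure.map_prodMap_map_fst _ measurable_id hAm, hσ1, Measure.map_id]
    · rw [Measure.map_prodMap_map_snd _ measurable_id hAm, hσ2]

lemma sq_W2_map_mulVec [IsProbabilityMeasure μ] [IsProbabilityMeasure ν]
    (hA : Aᵀ * A = 1) (hμ2 : Integrable (fun x => ∑ i, x i ^ 2) μ)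
    (hν2 : Integrable (fun z => ∑ j, z j ^ 2) ν) :
    W2 μ (ν.map A.mulVec) ^ 2 =
      W2 (μ.map Aᵀ.mulVec) ν ^ 2 + ∫ x, (∑ i, x i ^ 2 - ∑ j, (Aᵀ *ᵥ x) j ^ 2) ∂μ := by
  have : IsProbabilityMeasure (μ.map Aᵀ.mulVec) := Measure.isProbabilityMeasure_map (by fun_prop)
  rw [sq_W2, sq_W2, couplingCosts_map_mulVec hA hμ2 hν2]
  exact ((monotone_id.add_const _).map_csInf_of_continuousAt (by fun_prop)
    couplingCosts_nonempty ⟨0, fun _ => nonneg_of_mem_couplingCosts⟩).symm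

end Alignment

section SqrtSqAdd

variable {c : ℝ}

lemma strictMonoOn_sqrt_sq_add (hc : 0 ≤ c) :
    StrictMonoOn (fun t : ℝ => √(t ^ 2 + c)) (Set.Ici 0) :=
  fun _ _ _ _ hab => Real.sqrt_lt_sqrt (by positivity) (by gcongr)

lemma sInf_eq_sqrt_sq_sInf_add {ι : Type*} {P : ι → Prop} (hP : ∃ i, P i) (hc : 0 ≤ c)
    {f g : ι → ℝ} (hf : ∀ i, 0 ≤ f i) (hg : ∀ i, 0 ≤ g i)
    (hfg : ∀ i, P i → f i ^ 2 = g i ^ 2 + c) :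
    sInf {v | ∃ i, P i ∧ v = f i} = √(sInf {v | ∃ i, P i ∧ v = g i} ^ 2 + c) := by
  set G := {v | ∃ i, P i ∧ v = g i}
  have hG : G ⊆ Set.Ici 0 := by
    rintro _ ⟨i, -, rfl⟩
    exact hg i
  have hsqrt : ∀ i, P i → √(g i ^ 2 + c) = f i := fun i hi => by
    rw [← hfg i hi, Real.sqrt_sq (hf i)]
  have hF : {v | ∃ i, P i ∧ v = f i} = (fun t => √(t ^ 2 + c)) '' G := by
    ext v
    constructor
    · rintro ⟨i, hi, rfl⟩
      exact ⟨g i, ⟨i, hi, rfl⟩, hsqrt i hi⟩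
    · rintro ⟨_, ⟨i, hi, rfl⟩, rfl⟩
      exact ⟨i, hi, hsqrt i hi⟩
  obtain ⟨i, hi⟩ := hP
  rw [hF, ← ((strictMonoOn_sqrt_sq_add hc).monotoneOn.mono hG).map_csInf_of_continuousWithinAt
    (by fun_prop) ⟨g i, i, hi, rfl⟩ ⟨0, hG⟩]

end SqrtSqAdd

theorem downward_upward_equivalence_general
    {n d : ℕ} (hnd : d ≤ n)
    (μ : Measure (Fin n → ℝ)) [IsProbabilityMeasure μ]
    (ν : Measure (Fin d → ℝ)) [IsProbabilityMeasure ν]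
    (hμ2 : Integrable (fun x => ∑ i, (x i) ^ 2) μ)
    (hν2 : Integrable (fun z => ∑ j, (z j) ^ 2) ν)
    (hμcov : ∀ i i', ∫ x, x i * x i' ∂μ = if i = i' then 1 else 0) :
    (W2up μ ν) ^ 2 = (W2down μ ν) ^ 2 + ((n : ℝ) - d) ∧
    ∀ A : Matrix (Fin n) (Fin d) ℝ, Aᵀ * A = 1 →
      (W2 μ (ν.map A.mulVec) = W2up μ ν ↔ W2 (μ.map Aᵀ.mulVec) ν = W2down μ ν) := by
  have hc : (0 : ℝ) ≤ n - d := sub_nonneg.2 (Nat.cast_le.2 hnd)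
  have hsq : ∀ A : Matrix (Fin n) (Fin d) ℝ, Aᵀ * A = 1 →
      W2 μ (ν.map A.mulVec) ^ 2 = W2 (μ.map Aᵀ.mulVec) ν ^ 2 + (n - d) := fun A hA => by
    rw [sq_W2_map_mulVec hA hμ2 hν2,
      integral_sum_sq_sub_sum_sq_transpose_mulVec hμ2 hμcov hA]
  have hup : W2up μ ν = √(W2down μ ν ^ 2 + (n - d)) :=
    sInf_eq_sqrt_sq_sInf_add (exists_transpose_mul_self_eq_one hnd) hc
      (fun _ => W2_nonneg _ _) (fun _ => W2_nonneg _ _) hsq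
  have hdown : 0 ≤ W2down μ ν := Real.sInf_nonneg <| by
    rintro _ ⟨A, -, rfl⟩
    exact W2_nonneg _ _
  refine ⟨by rw [hup, Real.sq_sqrt (by positivity)], fun A hA => ?_⟩
  rw [hup, ← Real.sqrt_sq (W2_nonneg μ (ν.map A.mulVec)), hsq A hA]
  exact (strictMonoOn_sqrt_sq_add hc).injOn.eq_iff (W2_nonneg _ _) hdown

/-- Equivalence of the downward and upward alignment problems under normalization:
`(W₂^↑)² = (W₂^↓)² + (n − d)`, and `A ∈ H` is optimal for the upward problem iff it is
optimal for the downward problem. -/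
theorem downward_upward_equivalence
    {n d : ℕ} (hd : 1 ≤ d) (hnd : d ≤ n)
    (μ : Measure (Fin n → ℝ)) [IsProbabilityMeasure μ]
    (ν : Measure (Fin d → ℝ)) [IsProbabilityMeasure ν]
    (hμ2 : Integrable (fun x => ∑ i, (x i) ^ 2) μ)
    (hν2 : Integrable (fun z => ∑ j, (z j) ^ 2) ν)
    (hμmean : ∀ i, ∫ x, x i ∂μ = 0)
    (hμcov : ∀ i i', ∫ x, x i * x i' ∂μ = if i = i' then 1 else 0)
    (hνmean : ∀ j, ∫ z, z j ∂ν = 0)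
    (hνcov : ∀ j j', ∫ z, z j * z j' ∂ν = if j = j' then 1 else 0) :
    (W2up μ ν) ^ 2 = (W2down μ ν) ^ 2 + ((n : ℝ) - d) ∧
    ∀ A : Matrix (Fin n) (Fin d) ℝ, Aᵀ * A = 1 →
      (W2 μ (ν.map A.mulVec) = W2up μ ν ↔ W2 (μ.map Aᵀ.mulVec) ν = W2down μ ν) :=
  downward_upward_equivalence_general hnd μ ν hμ2 hν2 hμcov
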